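/- Case III estimate: let 0 < δ ≤ 1, m ≥ 2, and suppose a, b ∈ ℝ with |b - a| < 3δ and the interval J between a and b intersects I_δ = (1-δ,1+δ) ∪ (-1-δ,-1+δ). Then for every s ∈ J one has |1 - s^2| ≤ 8δ + 16δ^2, and consequently for g(s) = |1-s^2|^m and G(u) = ∫_0^u g, |G(b) - G(a)| ≤ 3δ(8δ + 16δ^2)^m. -/
import Mathlib


open MeasureTheory intervalIntegral

/-- Case III estimate: if `0 < δ ≤ 1`, `|b - a| < 3δ` and the closed interval
`J` between `a` and `b` intersects `I_δ = (1-δ,1+δ) ∪ (-1-δ,-1+δ)`, then every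
`s ∈ J` satisfies `|1 - s^2| ≤ 8δ + 16δ^2`, and consequently for
`g(s) = |1-s^2|^m` and `G(u) = ∫_0^u g`, `|G(b) - G(a)| ≤ 3δ(8δ + 16δ^2)^m`. -/
theorem stmt_6 (m δ : ℝ) (hm : 2 ≤ m) (hδ : 0 < δ) (hδ1 : δ ≤ 1)
    (a b : ℝ) (hab : |b - a| < 3 * δ)
    (hmeet : (Set.uIcc a b ∩
      (Set.Ioo (1 - δ) (1 + δ) ∪ Set.Ioo (-1 - δ) (-1 + δ))).Nonempty)
    (G : ℝ → ℝ) (hG : ∀ u : ℝ, G u = ∫ s in (0:ℝ)..u, |1 - s ^ 2| ^ m) :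
    (∀ s ∈ Set.uIcc a b, |1 - s ^ 2| ≤ 8 * δ + 16 * δ ^ 2) ∧
    |G b - G a| ≤ 3 * δ * (8 * δ + 16 * δ ^ 2) ^ m := by
  obtain ⟨c, hcJ, hcI⟩ := hmeet
  have hbound : ∀ s ∈ Set.uIcc a b, |1 - s ^ 2| ≤ 8 * δ + 16 * δ ^ 2 := by
    intro s hs
    have hsc : |s - c| < 3 * δ := by
      have h1 := Set.abs_sub_le_of_uIcc_subset_uIcc
        (Set.uIcc_subset_uIcc_iff_mem.mpr ⟨hs, hcJ⟩)
      have : |s - c| ≤ |b - a| := (abs_sub_comm c s ▸ h1)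
      linarith
    have key : ∀ e : ℝ, |c - e| < δ → |e| = 1 → |1 - s ^ 2| ≤ 8 * δ + 16 * δ ^ 2 := by
      intro e he hee
      have h1 : |s - e| < 4 * δ := by
        calc |s - e| = |(s - c) + (c - e)| := by ring_nf
          _ ≤ |s - c| + |c - e| := abs_add_le _ _
          _ < 4 * δ := by linarith
      have h2 : |s + e| ≤ 4 * δ + 2 := by
        calc |s + e| = |(s - e) + 2 * e| := by ring_nf
          _ ≤ |s - e| + |2 * e| := abs_add_le _ _
          _ ≤ 4 * δ + 2 := by
            rw [abs_mul, hee]; norm_num; linarith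
      have he2 : e ^ 2 = 1 := by
        have := sq_abs e; rw [hee] at this; nlinarith
      have : |1 - s ^ 2| = |s - e| * |s + e| := by
        rw [← abs_mul, ← abs_neg]; congr 1; nlinarith
      rw [this]
      have h0 : 0 ≤ |s - e| := abs_nonneg _
      nlinarith [abs_nonneg (s + e)]
    rcases hcI with h | h
    · exact key 1 (by rw [abs_sub_lt_iff]; constructor <;> simp at h ⊢ <;> linarith [h.1, h.2]) (by norm_num)
    · exact key (-1) (by rw [abs_sub_lt_iff]; constructor <;> simp at h ⊢ <;> linarith [h.1, h.2]) (by norm_num)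
  refine ⟨hbound, ?_⟩
  have hm0 : (0:ℝ) ≤ m := by linarith
  have hcont : Continuous fun s : ℝ => |1 - s ^ 2| ^ m := by
    apply Continuous.rpow_const (by continuity)
    intro x; right; exact hm0
  have hint : ∀ u v : ℝ, IntervalIntegrable (fun s : ℝ => |1 - s ^ 2| ^ m) volume u v :=
    fun u v => hcont.intervalIntegrable u v
  have hGab : G b - G a = ∫ s in a..b, |1 - s ^ 2| ^ m := by
    rw [hG, hG, intervalIntegral.integral_interval_sub_left (hint 0 b) (hint 0 a)]
  rw [hGab]
  have hC : (0:ℝ) ≤ 8 * δ + 16 * δ ^ 2 := by positivity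
  have := intervalIntegral.norm_integral_le_of_norm_le_const
    (C := (8 * δ + 16 * δ ^ 2) ^ m) (f := fun s : ℝ => |1 - s ^ 2| ^ m)
    (a := a) (b := b) ?_
  · rw [Real.norm_eq_abs] at this
    calc |∫ s in a..b, |1 - s ^ 2| ^ m| ≤ (8 * δ + 16 * δ ^ 2) ^ m * |b - a| := this
      _ ≤ (8 * δ + 16 * δ ^ 2) ^ m * (3 * δ) := by
        apply mul_le_mul_of_nonneg_left (le_of_lt hab) (Real.rpow_nonneg hC m)
      _ = 3 * δ * (8 * δ + 16 * δ ^ 2) ^ m := by ring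
  · intro x hx
    rw [Real.norm_eq_abs, abs_of_nonneg (Real.rpow_nonneg (abs_nonneg _) m)]
    exact Real.rpow_le_rpow (abs_nonneg _) (hbound x (Set.uIoc_subset_uIcc hx)) hm0
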